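/- For all integers m ≥ 2 and 1 ≤ x < m, the quantity U_m(x) = 2·∑_{k=m+2}^{m+x+1} 1/k − 2(−1)^{m+x}/((m+x+2)(m+x+1)) + 2(−1)^m/((m+2)(m+1)) satisfies U_m(x) < 2 log 2. -/

import Mathlib

lemma aux_log_gap (a : ℝ) (ha : 1 ≤ a) : 1/(a+1) ≤ Real.log (a+1) - Real.log a := by
  have h0 : (0:ℝ) < a := by linarith
  have h1 : (0:ℝ) < a + 1 := by linarith
  have h := Real.log_le_sub_one_of_pos (show (0:ℝ) < a/(a+1) by positivity)
  rw [Real.log_div h0.ne' h1.ne'] at h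
  have heq : a / (a+1) - 1 = -(1/(a+1)) := by field_simp; ring
  rw [heq] at h
  linarith

lemma aux_neg_one_pow (n : ℕ) : (-1:ℝ) ≤ (-1:ℝ)^n ∧ (-1:ℝ)^n ≤ 1 := by
  rcases Nat.even_or_odd n with h | h
  · rw [h.neg_one_pow]; norm_num
  · rw [h.neg_one_pow]; norm_num

theorem U_lt_two_log_two (m x : ℕ) (hm : 2 ≤ m) (hx1 : 1 ≤ x) (hxm : x < m) :
    2 * (∑ k ∈ Finset.Icc (m + 2) (m + x + 1), (1 : ℝ) / k)
      - 2 * (-1 : ℝ) ^ (m + x) / ((m + x + 2) * (m + x + 1))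
      + 2 * (-1 : ℝ) ^ m / ((m + 2) * (m + 1)) < 2 * Real.log 2 := by
  have hm1 : (2:ℝ) ≤ (m:ℝ) := by exact_mod_cast hm
  have hx1' : (1:ℝ) ≤ (x:ℝ) := by exact_mod_cast hx1
  have hxm' : (x:ℝ) < (m:ℝ) := by exact_mod_cast hxm
  -- Step 1: sum bound
  have hsum : (∑ k ∈ Finset.Icc (m + 2) (m + x + 1), (1 : ℝ) / k)
      ≤ Real.log ((m:ℝ) + x + 1) - Real.log ((m:ℝ) + 1) := by
    have hre : (∑ k ∈ Finset.Icc (m + 2) (m + x + 1), (1 : ℝ) / k)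
        = ∑ i ∈ Finset.range x, (1:ℝ) / ((m:ℝ) + 2 + i) := by
      rw [← Finset.Ico_add_one_right_eq_Icc, Finset.sum_Ico_eq_sum_range]
      have hx : m + x + 1 + 1 - (m + 2) = x := by omega
      rw [hx]
      apply Finset.sum_congr rfl
      intro i _
      push_cast
      ring_nf
    rw [hre]
    have htel := Finset.sum_range_sub (fun i : ℕ => Real.log ((m:ℝ) + 1 + i)) x
    have hle : ∑ i ∈ Finset.range x, (1:ℝ) / ((m:ℝ) + 2 + i)
        ≤ ∑ i ∈ Finset.range x,
          (Real.log ((m:ℝ) + 1 + ((i+1:ℕ):ℝ)) - Real.log ((m:ℝ) + 1 + i)) := by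
      apply Finset.sum_le_sum
      intro i _
      have h := aux_log_gap ((m:ℝ) + 1 + i) (by have hi : (0:ℝ) ≤ i := Nat.cast_nonneg i; linarith)
      have e2 : (m:ℝ) + 1 + ((i+1:ℕ):ℝ) = (m:ℝ) + 1 + i + 1 := by push_cast; ring
      rw [e2]
      have e1 : (m:ℝ) + 1 + i + 1 = (m:ℝ) + 2 + i := by ring
      rw [e1]
      rw [e1] at h
      exact h
    rw [htel] at hle
    calc ∑ i ∈ Finset.range x, (1:ℝ) / ((m:ℝ) + 2 + i)
        ≤ Real.log ((m:ℝ) + 1 + ((x:ℕ):ℝ)) - Real.log ((m:ℝ) + 1 + ((0:ℕ):ℝ)) := hle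
      _ = Real.log ((m:ℝ) + x + 1) - Real.log ((m:ℝ) + 1) := by push_cast; ring_nf
  -- Step 2: log(m+x+1) ≤ log 2 + log m
  have hlog2 : Real.log ((m:ℝ) + x + 1) ≤ Real.log 2 + Real.log (m:ℝ) := by
    rw [← Real.log_mul (by norm_num) (by positivity)]
    have hxm2 : (x:ℝ) + 1 ≤ (m:ℝ) := by exact_mod_cast hxm
    have h2 : (m:ℝ) + x + 1 ≤ 2 * m := by linarith
    exact Real.log_le_log (by positivity) h2
  -- Step 3
  have hgap : 1/((m:ℝ)+1) ≤ Real.log ((m:ℝ)+1) - Real.log (m:ℝ) :=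
    aux_log_gap (m:ℝ) (by linarith)
  -- Step 4: correction terms
  have hD2 : (0:ℝ) < ((m:ℝ)+2)*((m:ℝ)+1) := by positivity
  have hD1 : (0:ℝ) < ((m:ℝ)+x+2)*((m:ℝ)+x+1) := by positivity
  have hc1 : - (2 * (-1 : ℝ) ^ (m + x) / (((m:ℝ) + x + 2) * ((m:ℝ) + x + 1)))
      ≤ 2 / (((m:ℝ)+2)*((m:ℝ)+1)) := by
    have h := (aux_neg_one_pow (m+x)).1
    have step1 : - (2 * (-1 : ℝ) ^ (m + x) / (((m:ℝ) + x + 2) * ((m:ℝ) + x + 1)))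
        ≤ 2 / (((m:ℝ)+x+2)*((m:ℝ)+x+1)) := by
      rw [← neg_div]
      exact div_le_div_of_nonneg_right (by linarith) hD1.le
    have step2 : 2 / (((m:ℝ)+x+2)*((m:ℝ)+x+1)) ≤ 2 / (((m:ℝ)+2)*((m:ℝ)+1)) := by
      apply div_le_div_of_nonneg_left (by norm_num) hD2
      nlinarith
    linarith
  have hc2 : 2 * (-1 : ℝ) ^ m / (((m:ℝ) + 2) * ((m:ℝ) + 1))
      ≤ 2 / (((m:ℝ)+2)*((m:ℝ)+1)) := by
    have h := (aux_neg_one_pow m).2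
    exact div_le_div_of_nonneg_right (by linarith) hD2.le
  -- Step 5: key numeric
  have hkey : 2/(((m:ℝ)+2)*((m:ℝ)+1)) < 1/((m:ℝ)+1) := by
    rw [div_lt_div_iff₀ hD2 (by positivity)]
    nlinarith
  push_cast
  linarith [hsum, hlog2, hgap, hc1, hc2, hkey]
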